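/- (Local truncation error of CNFD) Let T > 0 and M > 0. Let Φ : [0,T] × ℝ → ℂ² be (b−a)-periodic in x, with all partial derivatives ∂_t^r ∂_x^s Φ for 0 ≤ r ≤ 3, 0 ≤ r + s ≤ 3 existing, continuous, and bounded in absolute value by M, and let V, A₁ : [0,T] × ℝ → ℝ be twice continuously differentiable in t with |V|, |A₁|, |∂_{tt}V|, |∂_{tt}A₁| ≤ M. Suppose Φ solves i∂_tΦ = (−iσ₁∂_x + σ₃)Φ + ε(V I₂ − A₁ σ₁)Φ on [0,T] × ℝ, where 0 < ε ≤ 1. Define the CNFD local truncation error ξⁿ_j = i (Φ(t_{n+1},x_j) − Φ(t_n,x_j))/τ + iσ₁ [δ_xΦ(t_n,·)(x_j) + δ_xΦ(t_{n+1},·)(x_j)]/2 − (σ₃ + εV(t_n + τ/2, x_j) I₂ − εA₁(t_n + τ/2, x_j) σ₁) (Φ(t_n,x_j) + Φ(t_{n+1},x_j))/2, where δ_x f(x_j) = (f(x_{j+1}) − f(x_{j−1}))/(2h). Then there exists a constant C > 0 depending only on M (and independent of ε, h, τ, n, j) such that |ξⁿ_j| ≤ C(h² + τ²) for all j = 0,…,N−1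 and all n with t_{n+1} ≤ T. -/

import Mathlib

open Complex Matrix Finset

noncomputable section

/-- The Pauli matrix σ₁. -/
def σ1 : Matrix (Fin 2) (Fin 2) ℂ := !![0, 1; 1, 0]

/-- The Pauli matrix σ₃. -/
def σ3 : Matrix (Fin 2) (Fin 2) ℂ := !![1, 0; 0, -1]

/-- Centered difference in space of a continuous function:
δ_x f(x) = (f(x+h) − f(x−h))/(2h). -/
def δxf (h : ℝ) (f : ℝ → Fin 2 → ℂ) (x : ℝ) : Fin 2 → ℂ :=
  ((2 * h : ℝ) : ℂ)⁻¹ • (f (x + h) - f (x - h))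

/-- The CNFD local truncation error at time t and grid point x:
ξ = iδ⁺_tΦ + iσ₁(δ_xΦ(t,·)(x) + δ_xΦ(t+τ,·)(x))/2
    − (σ₃ + εV(t+τ/2,x)I₂ − εA(t+τ/2,x)σ₁)(Φ(t,x) + Φ(t+τ,x))/2. -/
def cnfdXi (h τ ε : ℝ) (Φ : ℝ → ℝ → Fin 2 → ℂ) (V A : ℝ → ℝ → ℝ)
    (t x : ℝ) : Fin 2 → ℂ :=
  Complex.I • ((τ : ℂ)⁻¹ • (Φ (t + τ) x - Φ t x)) +
    Complex.I • σ1.mulVec ((2 : ℂ)⁻¹ • (δxf h (Φ t) x + δxf h (Φ (t + τ)) x)) -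
    (σ3.mulVec ((2 : ℂ)⁻¹ • (Φ t x + Φ (t + τ) x)) +
      ((ε * V (t + τ / 2) x : ℝ) : ℂ) • ((2 : ℂ)⁻¹ • (Φ t x + Φ (t + τ) x)) -
      ((ε * A (t + τ / 2) x : ℝ) : ℂ) • σ1.mulVec ((2 : ℂ)⁻¹ • (Φ t x + Φ (t + τ) x)))


/-! Subtracting the Dirac equation at the midpoint `(tₙ + τ/2, x_j)` from `ξⁿ_j` leaves three
consistency errors: the forward difference in time against `∂ₜΦ`, the time average of the
centered differences against `∂ₓΦ`, and the time average of `Φ` against its midpoint value.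
Each is a symmetric difference, so a Taylor expansion about the midpoint cancels the terms of
the wrong parity and bounds it by `M h²` or `M τ²`; the one-variable derivative bounds come
from those of `iteratedFDeriv` by restricting to coordinate lines. -/

open Set
open scoped Nat

section Taylor

variable {E : Type*} [NormedAddCommGroup E] [NormedSpace ℝ E] {n : ℕ} {f : ℝ → E} {K : ℝ}

lemma norm_sub_taylor_le_of_nonneg (hf : ContDiff ℝ (n + 1) f)
    (hK : ∀ u, ‖iteratedDeriv (n + 1) f u‖ ≤ K) (s : ℝ) {r : ℝ} (hr : 0 ≤ r) :
    ‖f (s + r) - ∑ k ∈ range (n + 1), ((k ! : ℝ)⁻¹ * r ^ k) • iteratedDeriv k f s‖ ≤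
      K * r ^ (n + 1) / n ! := by
  -- The interval is extended by `1` so that it is never degenerate, even when `r = 0`.
  set I := Icc s (s + r + 1)
  have hI : UniqueDiffOn ℝ I := uniqueDiffOn_Icc (by linarith)
  have hderiv : ∀ k ≤ n + 1, ∀ y ∈ I, iteratedDerivWithin k f I y = iteratedDeriv k f y :=
    fun k hk y hy =>
      iteratedDerivWithin_eq_iteratedDeriv hI (hf.contDiffAt.of_le (by exact_mod_cast hk)) hy
  have hs : s ∈ I := ⟨le_rfl, by linarith⟩
  have := taylor_mean_remainder_bound (by linarith) hf.contDiffOn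
    (show s + r ∈ I from ⟨by linarith, by linarith⟩)
    (fun y hy => (hderiv (n + 1) le_rfl y hy).symm ▸ hK y)
  rw [taylor_within_apply, add_sub_cancel_left] at this
  convert this using 4 with k hk
  rw [hderiv k (by simp at hk; omega) s hs]

lemma norm_sub_taylor_le (hf : ContDiff ℝ (n + 1) f)
    (hK : ∀ u, ‖iteratedDeriv (n + 1) f u‖ ≤ K) (s r : ℝ) :
    ‖f (s + r) - ∑ k ∈ range (n + 1), ((k ! : ℝ)⁻¹ * r ^ k) • iteratedDeriv k f s‖ ≤
      K * |r| ^ (n + 1) / n ! := by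
  rcases le_total 0 r with hr | hr
  · rw [abs_of_nonneg hr]
    exact norm_sub_taylor_le_of_nonneg hf hK s hr
  · have hrefl := norm_sub_taylor_le_of_nonneg (f := fun u => f (-u)) (hf.comp contDiff_neg)
      (fun u => by simpa [iteratedDeriv_comp_neg, norm_smul] using hK (-u)) (-s) (neg_nonneg.2 hr)
    rw [abs_of_nonpos hr]
    convert hrefl using 3
    · simp [add_comm]
    · refine sum_congr rfl fun k _ => ?_
      have hsq : ((-1 : ℝ) ^ k) * (-1) ^ k = 1 := by rw [← mul_pow]; simp
      rw [iteratedDeriv_comp_neg, neg_neg, smul_smul, neg_pow r]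
      congr 1
      linear_combination (-(k ! : ℝ)⁻¹ * r ^ k) * hsq

lemma norm_centeredDiff_sub_deriv_le (hf : ContDiff ℝ 3 f)
    (hK : ∀ u, ‖iteratedDeriv 3 f u‖ ≤ K) (s : ℝ) {r : ℝ} (hr : r ≠ 0) :
    ‖(2 * r)⁻¹ • (f (s + r) - f (s - r)) - deriv f s‖ ≤ K * r ^ 2 / 2 := by
  set T : ℝ → E := fun ρ => ∑ k ∈ range 3, ((k ! : ℝ)⁻¹ * ρ ^ k) • iteratedDeriv k f s
  have hR := norm_sub_taylor_le (n := 2) hf hK s r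
  have hL := norm_sub_taylor_le (n := 2) hf hK s (-r)
  have hodd : f (s + r) - f (s - r) =
      (2 * r) • deriv f s + ((f (s + r) - T r) - (f (s + -r) - T (-r))) := by
    simp only [T, sum_range_succ, sum_range_zero, iteratedDeriv_one, ← sub_eq_add_neg]
    module
  have hcancel : (2 * r)⁻¹ • (f (s + r) - f (s - r)) - deriv f s =
      (2 * r)⁻¹ • ((f (s + r) - T r) - (f (s + -r) - T (-r))) := by
    rw [hodd, smul_add, smul_smul, inv_mul_cancel₀ (by positivity), one_smul, add_sub_cancel_left]
  rw [hcancel, norm_smul]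
  calc ‖(2 * r)⁻¹‖ * ‖(f (s + r) - T r) - (f (s + -r) - T (-r))‖
      ≤ |2 * r|⁻¹ * (K * |r| ^ 3 / 2 ! + K * |-r| ^ 3 / 2 !) := by
        rw [Real.norm_eq_abs, abs_inv]
        gcongr
        exact norm_sub_le_of_le hR hL
    _ = K * r ^ 2 / 2 := by
        rw [abs_neg, abs_mul, show |r| ^ 3 = |r| * r ^ 2 by rw [← sq_abs]; ring]
        field_simp
        norm_num
        ring

lemma norm_midpoint_sub_le (hf : ContDiff ℝ 2 f)
    (hK : ∀ u, ‖iteratedDeriv 2 f u‖ ≤ K) (s r : ℝ) :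
    ‖(2 : ℝ)⁻¹ • (f (s - r) + f (s + r)) - f s‖ ≤ K * r ^ 2 := by
  set T : ℝ → E := fun ρ => ∑ k ∈ range 2, ((k ! : ℝ)⁻¹ * ρ ^ k) • iteratedDeriv k f s
  have hR := norm_sub_taylor_le (n := 1) hf hK s r
  have hL := norm_sub_taylor_le (n := 1) hf hK s (-r)
  have hcancel : (2 : ℝ)⁻¹ • (f (s - r) + f (s + r)) - f s =
      (2 : ℝ)⁻¹ • ((f (s + r) - T r) + (f (s + -r) - T (-r))) := by
    simp only [T, sum_range_succ, sum_range_zero, iteratedDeriv_zero, ← sub_eq_add_neg]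
    module
  rw [hcancel, norm_smul]
  calc ‖(2 : ℝ)⁻¹‖ * ‖(f (s + r) - T r) + (f (s + -r) - T (-r))‖
      ≤ 2⁻¹ * (K * |r| ^ 2 / 1 ! + K * |-r| ^ 2 / 1 !) := by
        rw [Real.norm_eq_abs, abs_of_pos (by norm_num)]
        gcongr
        exact norm_add_le_of_le hR hL
    _ = K * r ^ 2 := by rw [abs_neg, sq_abs]; norm_num; ring

end Taylor

section Slices

variable {G F : Type*} [NormedAddCommGroup G] [NormedSpace ℝ G]
  [NormedAddCommGroup F] [NormedSpace ℝ F]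

lemma norm_iteratedDeriv_comp_affine_le {f : G → F} {n : ℕ} (hf : ContDiff ℝ n f) {k : ℕ}
    (hk : k ≤ n) {L : ℝ →L[ℝ] G} (hL : ‖L‖ ≤ 1) (c : G) (t : ℝ) :
    ‖iteratedDeriv k (fun u => f (L u + c)) t‖ ≤ ‖iteratedFDeriv ℝ k f (L t + c)‖ := by
  have hshift : ContDiff ℝ n (fun p => f (p + c)) := hf.comp (contDiff_id.add contDiff_const)
  rw [← norm_iteratedFDeriv_eq_norm_iteratedDeriv,
    show (fun u => f (L u + c)) = (fun p => f (p + c)) ∘ L from rfl,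
    L.iteratedFDeriv_comp_right hshift t (by exact_mod_cast hk), iteratedFDeriv_comp_add_right]
  calc _ ≤ ‖iteratedFDeriv ℝ k f (L t + c)‖ * ∏ _ : Fin k, ‖L‖ :=
        ContinuousMultilinearMap.norm_compContinuousLinearMap_le _ _
    _ ≤ ‖iteratedFDeriv ℝ k f (L t + c)‖ * 1 := by
        gcongr
        exact Finset.prod_le_one (fun _ _ => norm_nonneg _) fun _ _ => hL
    _ = _ := mul_one _

lemma norm_iteratedFDeriv_fderiv_apply_le {f : G → F} {n : ℕ} (hf : ContDiff ℝ (n + 1) f)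
    (v x : G) :
    ‖iteratedFDeriv ℝ n (fun p => fderiv ℝ f p v) x‖ ≤ ‖v‖ * ‖iteratedFDeriv ℝ (n + 1) f x‖ := by
  rw [← norm_iteratedFDeriv_fderiv]
  exact norm_iteratedFDeriv_clm_apply_const (hf.fderiv_right le_rfl).contDiffAt le_rfl

variable {f : ℝ × ℝ → F} {n k : ℕ}

lemma norm_iteratedDeriv_fst_slice_le (hf : ContDiff ℝ n f) (hk : k ≤ n) (t x : ℝ) :
    ‖iteratedDeriv k (fun u => f (u, x)) t‖ ≤ ‖iteratedFDeriv ℝ k f (t, x)‖ := by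
  simpa using norm_iteratedDeriv_comp_affine_le hf hk
    (ContinuousLinearMap.norm_inl_le_one ℝ ℝ ℝ) (0, x) t

lemma norm_iteratedDeriv_snd_slice_le (hf : ContDiff ℝ n f) (hk : k ≤ n) (t x : ℝ) :
    ‖iteratedDeriv k (fun y => f (t, y)) x‖ ≤ ‖iteratedFDeriv ℝ k f (t, x)‖ := by
  simpa using norm_iteratedDeriv_comp_affine_le hf hk
    (ContinuousLinearMap.norm_inr_le_one ℝ ℝ ℝ) (t, 0) x

lemma deriv_snd_slice (hf : Differentiable ℝ f) (t x : ℝ) :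
    deriv (fun y => f (t, y)) x = fderiv ℝ f (t, x) (0, 1) :=
  ((hf (t, x)).hasFDerivAt.comp_hasDerivAt x
    ((hasDerivAt_const x t).prodMk (hasDerivAt_id x))).deriv

end Slices

lemma norm_sigma1_mulVec_le (v : Fin 2 → ℂ) : ‖σ1 *ᵥ v‖ ≤ ‖v‖ := by
  refine (pi_norm_le_iff_of_nonneg (norm_nonneg v)).2 fun i => ?_
  fin_cases i <;> simpa [σ1, mulVec, dotProduct] using norm_le_pi_norm v _

lemma norm_sigma3_mulVec_le (v : Fin 2 → ℂ) : ‖σ3 *ᵥ v‖ ≤ ‖v‖ := by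
  refine (pi_norm_le_iff_of_nonneg (norm_nonneg v)).2 fun i => ?_
  fin_cases i <;> simpa [σ3, mulVec, dotProduct] using norm_le_pi_norm v _

lemma sqrt_sum_norm_sq_le {ι E : Type*} [Fintype ι] [SeminormedAddCommGroup E] (v : ι → E) :
    √(∑ i, ‖v i‖ ^ 2) ≤ √(Fintype.card ι) * ‖v‖ := by
  calc √(∑ i, ‖v i‖ ^ 2) ≤ √(∑ _i : ι, ‖v‖ ^ 2) := by
        gcongr with i; exact norm_le_pi_norm v i
    _ = √(Fintype.card ι) * ‖v‖ := by
        rw [sum_const, Finset.card_univ, nsmul_eq_mul, Real.sqrt_mul (by positivity),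
          Real.sqrt_sq (norm_nonneg v)]

section Consistency

variable {g : ℝ → Fin 2 → ℂ} {K : ℝ}

lemma norm_δxf_sub_deriv_le (hg : ContDiff ℝ 3 g) (hK : ∀ y, ‖iteratedDeriv 3 g y‖ ≤ K)
    (x : ℝ) {h : ℝ} (hh : h ≠ 0) : ‖δxf h g x - deriv g x‖ ≤ K * h ^ 2 / 2 := by
  rw [δxf, ← ofReal_inv, Complex.coe_smul]
  exact norm_centeredDiff_sub_deriv_le hg hK x hh

lemma norm_forwardDiff_sub_deriv_midpoint_le (hg : ContDiff ℝ 3 g)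
    (hK : ∀ u, ‖iteratedDeriv 3 g u‖ ≤ K) (t : ℝ) {τ : ℝ} (hτ : τ ≠ 0) :
    ‖(τ : ℂ)⁻¹ • (g (t + τ) - g t) - deriv g (t + τ / 2)‖ ≤ K * τ ^ 2 / 8 := by
  have := norm_centeredDiff_sub_deriv_le hg hK (t + τ / 2) (r := τ / 2) (by positivity)
  rw [show 2 * (τ / 2) = τ by ring, show t + τ / 2 + τ / 2 = t + τ by ring,
    add_sub_cancel_right] at this
  rw [← ofReal_inv, Complex.coe_smul]
  linarith

lemma norm_average_sub_midpoint_le (hg : ContDiff ℝ 2 g)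
    (hK : ∀ u, ‖iteratedDeriv 2 g u‖ ≤ K) (t τ : ℝ) :
    ‖(2 : ℂ)⁻¹ • (g t + g (t + τ)) - g (t + τ / 2)‖ ≤ K * τ ^ 2 / 4 := by
  have := norm_midpoint_sub_le hg hK (t + τ / 2) (τ / 2)
  rw [show t + τ / 2 - τ / 2 = t by ring, show t + τ / 2 + τ / 2 = t + τ by ring] at this
  rw [show (2 : ℂ)⁻¹ = ((2⁻¹ : ℝ) : ℂ) by push_cast; rfl, Complex.coe_smul]
  linarith

end Consistency

section ExactSolution

variable {Φ : ℝ → ℝ → Fin 2 → ℂ} {M : ℝ}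

lemma norm_cnfd_timeDiff_error_le (hΦ : ContDiff ℝ 3 (fun p : ℝ × ℝ => Φ p.1 p.2))
    (hΦb : ∀ p : ℝ × ℝ, ∀ k : ℕ, k ≤ 3 →
      ‖iteratedFDeriv ℝ k (fun q : ℝ × ℝ => Φ q.1 q.2) p‖ ≤ M)
    (t x : ℝ) {τ : ℝ} (hτ : τ ≠ 0) :
    ‖(τ : ℂ)⁻¹ • (Φ (t + τ) x - Φ t x) - deriv (fun u => Φ u x) (t + τ / 2)‖ ≤
      M * τ ^ 2 / 8 :=
  norm_forwardDiff_sub_deriv_midpoint_le (hΦ.comp (contDiff_id.prodMk contDiff_const))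
    (fun u => (norm_iteratedDeriv_fst_slice_le hΦ le_rfl u x).trans (hΦb _ 3 le_rfl)) t hτ

lemma norm_cnfd_average_error_le (hΦ : ContDiff ℝ 3 (fun p : ℝ × ℝ => Φ p.1 p.2))
    (hΦb : ∀ p : ℝ × ℝ, ∀ k : ℕ, k ≤ 3 →
      ‖iteratedFDeriv ℝ k (fun q : ℝ × ℝ => Φ q.1 q.2) p‖ ≤ M)
    (t x τ : ℝ) :
    ‖(2 : ℂ)⁻¹ • (Φ t x + Φ (t + τ) x) - Φ (t + τ / 2) x‖ ≤ M * τ ^ 2 / 4 :=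
  norm_average_sub_midpoint_le
    ((hΦ.comp (contDiff_id.prodMk contDiff_const)).of_le (by norm_num))
    (fun u => (norm_iteratedDeriv_fst_slice_le hΦ (by norm_num) u x).trans
      (hΦb _ 2 (by norm_num))) t τ

lemma norm_cnfd_spaceDiff_error_le (hΦ : ContDiff ℝ 3 (fun p : ℝ × ℝ => Φ p.1 p.2))
    (hΦb : ∀ p : ℝ × ℝ, ∀ k : ℕ, k ≤ 3 →
      ‖iteratedFDeriv ℝ k (fun q : ℝ × ℝ => Φ q.1 q.2) p‖ ≤ M)
    (t x τ : ℝ) {h : ℝ} (hh : h ≠ 0) :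
    ‖(2 : ℂ)⁻¹ • (δxf h (Φ t) x + δxf h (Φ (t + τ)) x) -
        deriv (fun y => Φ (t + τ / 2) y) x‖ ≤ M * h ^ 2 / 2 + M * τ ^ 2 / 4 := by
  set D : ℝ × ℝ → Fin 2 → ℂ := fun p => fderiv ℝ (fun q : ℝ × ℝ => Φ q.1 q.2) p (0, 1)
  have hD : ContDiff ℝ 2 D := (hΦ.fderiv_right (by norm_num)).clm_apply contDiff_const
  have hDx : ∀ u, deriv (fun y => Φ u y) x = D (u, x) := fun u =>
    deriv_snd_slice (hΦ.differentiable (by norm_num)) u x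
  have hδ : ∀ u, ‖δxf h (Φ u) x - D (u, x)‖ ≤ M * h ^ 2 / 2 := fun u =>
    hDx u ▸ norm_δxf_sub_deriv_le (hΦ.comp (contDiff_const.prodMk contDiff_id))
      (fun y => (norm_iteratedDeriv_snd_slice_le hΦ le_rfl u y).trans (hΦb _ 3 le_rfl)) x hh
  have havg : ‖(2 : ℂ)⁻¹ • (D (t, x) + D (t + τ, x)) - D (t + τ / 2, x)‖ ≤ M * τ ^ 2 / 4 :=
    norm_average_sub_midpoint_le (hD.comp (contDiff_id.prodMk contDiff_const))
      (fun u => (norm_iteratedDeriv_fst_slice_le hD le_rfl u x).trans <|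
        (norm_iteratedFDeriv_fderiv_apply_le (n := 2) hΦ _ _).trans
          (by simpa using hΦb (u, x) 3 le_rfl)) t τ
  rw [hDx]
  calc _ = ‖(2 : ℂ)⁻¹ • ((δxf h (Φ t) x - D (t, x)) + (δxf h (Φ (t + τ)) x - D (t + τ, x))) +
        ((2 : ℂ)⁻¹ • (D (t, x) + D (t + τ, x)) - D (t + τ / 2, x))‖ := by congr 1; module
    _ ≤ 2⁻¹ * (‖δxf h (Φ t) x - D (t, x)‖ + ‖δxf h (Φ (t + τ)) x - D (t + τ, x)‖) +
        ‖(2 : ℂ)⁻¹ • (D (t, x) + D (t + τ, x)) - D (t + τ / 2, x)‖ := by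
      grw [norm_add_le, norm_smul, norm_add_le]
      norm_num
    _ ≤ 2⁻¹ * (M * h ^ 2 / 2 + M * h ^ 2 / 2) + M * τ ^ 2 / 4 := by
      grw [hδ t, hδ (t + τ), havg]
    _ = M * h ^ 2 / 2 + M * τ ^ 2 / 4 := by ring

end ExactSolution

lemma norm_cnfdXi_le_of_dirac {h τ ε M t x : ℝ} {Φ : ℝ → ℝ → Fin 2 → ℂ} {V A : ℝ → ℝ → ℝ}
    {Dt Dx : Fin 2 → ℂ}
    (hdirac : I • Dt = (-I) • σ1 *ᵥ Dx + σ3 *ᵥ Φ (t + τ / 2) x +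
      (ε : ℂ) • (((V (t + τ / 2) x : ℝ) : ℂ) • Φ (t + τ / 2) x -
        ((A (t + τ / 2) x : ℝ) : ℂ) • σ1 *ᵥ Φ (t + τ / 2) x))
    (hV : |ε * V (t + τ / 2) x| ≤ M) (hA : |ε * A (t + τ / 2) x| ≤ M) :
    ‖cnfdXi h τ ε Φ V A t x‖ ≤ ‖(τ : ℂ)⁻¹ • (Φ (t + τ) x - Φ t x) - Dt‖ +
      ‖(2 : ℂ)⁻¹ • (δxf h (Φ t) x + δxf h (Φ (t + τ)) x) - Dx‖ +
      (1 + 2 * M) * ‖(2 : ℂ)⁻¹ • (Φ t x + Φ (t + τ) x) - Φ (t + τ / 2) x‖ := by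
  set e₁ := (τ : ℂ)⁻¹ • (Φ (t + τ) x - Φ t x) - Dt
  set e₂ := (2 : ℂ)⁻¹ • (δxf h (Φ t) x + δxf h (Φ (t + τ)) x) - Dx
  set e₃ := (2 : ℂ)⁻¹ • (Φ t x + Φ (t + τ) x) - Φ (t + τ / 2) x
  set cV : ℂ := ((ε * V (t + τ / 2) x : ℝ) : ℂ)
  set cA : ℂ := ((ε * A (t + τ / 2) x : ℝ) : ℂ)
  have hξ : cnfdXi h τ ε Φ V A t x =
      I • e₁ + I • σ1 *ᵥ e₂ - (σ3 *ᵥ e₃ + cV • e₃ - cA • σ1 *ᵥ e₃) := by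
    simp only [cnfdXi, e₁, e₂, e₃, cV, cA, mulVec_add, mulVec_sub, mulVec_smul, ofReal_mul]
    linear_combination (norm := module) hdirac
  have hcV : ‖cV‖ ≤ M := by rwa [norm_real, Real.norm_eq_abs]
  have hcA : ‖cA‖ ≤ M := by rwa [norm_real, Real.norm_eq_abs]
  rw [hξ]
  calc _ ≤ ‖e₁‖ + ‖e₂‖ + (‖e₃‖ + ‖cV‖ * ‖e₃‖ + ‖cA‖ * ‖e₃‖) := by
        grw [norm_sub_le, norm_add_le, norm_sub_le, norm_add_le, norm_smul, norm_smul, norm_smul,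
          norm_smul, norm_sigma1_mulVec_le, norm_sigma1_mulVec_le, norm_sigma3_mulVec_le, norm_I]
        linarith
    _ ≤ _ := by grw [hcV, hcA]; linarith

/-- Local truncation error bound of the CNFD method for the 1D Dirac
equation with small potentials: |ξⁿ_j| ≤ C(h² + τ²), with C depending
only on the regularity bound M. -/
theorem cnfd_local_truncation_error (M : ℝ) (hM : 0 < M) :
    ∃ C > 0,
      ∀ (T a b : ℝ) (N : ℕ) (h τ ε : ℝ) (Φ : ℝ → ℝ → Fin 2 → ℂ) (V A : ℝ → ℝ → ℝ),
        0 < T → a < b → 0 < N → Even N → h = (b - a) / N → 0 < τ → 0 < ε → ε ≤ 1 →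
        -- regularity and bounds of the exact solution
        ContDiff ℝ 3 (fun p : ℝ × ℝ => Φ p.1 p.2) →
        (∀ p : ℝ × ℝ, ∀ k : ℕ, k ≤ 3 →
          ‖iteratedFDeriv ℝ k (fun q : ℝ × ℝ => Φ q.1 q.2) p‖ ≤ M) →
        (∀ t x, Φ t (x + (b - a)) = Φ t x) →
        -- regularity and bounds of the potentials
        (∀ x, ContDiff ℝ 2 fun t => V t x) → (∀ x, ContDiff ℝ 2 fun t => A t x) →
        (∀ t x, |V t x| ≤ M ∧ |A t x| ≤ M ∧
          |iteratedDeriv 2 (fun s => V s x) t| ≤ M ∧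
          |iteratedDeriv 2 (fun s => A s x) t| ≤ M) →
        -- Φ solves the Dirac equation on [0,T] × ℝ
        (∀ t x, 0 ≤ t → t ≤ T →
          Complex.I • deriv (fun s => Φ s x) t =
            (-Complex.I) • σ1.mulVec (deriv (fun y => Φ t y) x) + σ3.mulVec (Φ t x) +
              (ε : ℂ) • (((V t x : ℝ) : ℂ) • Φ t x -
                ((A t x : ℝ) : ℂ) • σ1.mulVec (Φ t x))) →
        -- conclusion: the local truncation error is O(h² + τ²)
        ∀ (n : ℕ) (j : ℤ), 0 ≤ j → j < (N : ℤ) → ((n : ℝ) + 1) * τ ≤ T →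
          Real.sqrt (∑ i, ‖cnfdXi h τ ε Φ V A ((n : ℝ) * τ) (a + (j : ℝ) * h) i‖ ^ 2) ≤
            C * (h ^ 2 + τ ^ 2) := by
  refine ⟨(M + 1) ^ 2, by positivity, ?_⟩
  intro T a b N h τ ε Φ V A _ hab hN _ hh hτ hε hε1 hΦ hΦb _ _ _ hVA hdirac n j _ _ hnT
  set t := (n : ℝ) * τ
  set x := a + (j : ℝ) * h
  have hh0 : 0 < h := hh ▸ div_pos (sub_pos.2 hab) (by exact_mod_cast hN)
  have hε_mul_le : ∀ W : ℝ, |W| ≤ M → |ε * W| ≤ M := fun W hW => by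
    rw [abs_mul, abs_of_pos hε]; nlinarith [abs_nonneg W]
  have hmid : t + τ / 2 ≤ T := by linarith [add_mul (n : ℝ) 1 τ]
  have hξ := norm_cnfdXi_le_of_dirac (h := h) (hdirac (t + τ / 2) x (by positivity) hmid)
    (hε_mul_le _ (hVA _ x).1) (hε_mul_le _ (hVA _ x).2.1)
  grw [norm_cnfd_timeDiff_error_le hΦ hΦb t x hτ.ne',
    norm_cnfd_spaceDiff_error_le hΦ hΦb t x τ hh0.ne', norm_cnfd_average_error_le hΦ hΦb t x τ] at hξ
  calc √(∑ i, ‖cnfdXi h τ ε Φ V A t x i‖ ^ 2) ≤ √2 * ‖cnfdXi h τ ε Φ V A t x‖ := by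
        simpa using sqrt_sum_norm_sq_le (cnfdXi h τ ε Φ V A t x)
    _ ≤ 2 * ‖cnfdXi h τ ε Φ V A t x‖ := by
        gcongr; exact Real.sqrt_le_iff.2 ⟨by norm_num, by norm_num⟩
    _ ≤ (M + 1) ^ 2 * (h ^ 2 + τ ^ 2) := by
        nlinarith [mul_nonneg (sq_nonneg M) (sq_nonneg h), mul_nonneg hM.le (sq_nonneg h),
          mul_nonneg hM.le (sq_nonneg τ), sq_nonneg h, sq_nonneg τ]

end
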